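/- In ℝ³, the function ρ₂(x,t) = (4π)^{-3/2}(1+νt)^{-1/2} (e^{-(|x|+ct)²/(4(1+νt))} - e^{-(|x|-ct)²/(4(1+νt))})/(c|x|) satisfies ρ₂(·,t) = -(w(t) * K_ν(t) * φ₀)(·) for t > 0; equivalently, ρ₂ solves the system ∂_t ρ = νΔρ - a, ∂_t a = -c²Δρ + νΔa (in the ρ component), being the wave evolution with zero initial position and initial velocity -φ₀ composed with the heat semigroup: u(x,t) = -∫₀ᵗ [(|x|-cs)u₀(||x|-cs|) + (|x|+cs)u₀(|x|+cs)]/(2|x|) ds with u₀ = K_ν(t)*φ₀. -/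

import Mathlib

/-!
Since `d/ds e^{-(r ∓ cs)²/(4λ)} = ± c (r ∓ cs)/(2λ) · e^{-(r ∓ cs)²/(4λ)}`, the integrand of the
radial wave formula applied to a Gaussian is an exact derivative, with primitive
`λ/(cr) · (u₀(r - cs) - u₀(r + cs))`; evaluating it between `0` and `t` and absorbing the factor `λ`
into the normalisation `(4πλ)^{-3/2}` gives the closed form.
-/

open MeasureTheory Real intervalIntegral

noncomputable section

/-- The radial Gaussian `u₀(r) = (4πλ)^{-3/2} e^{-r²/(4λ)}` (the heat evolution of `φ₀`). -/
def gaussRad (lam r : ℝ) : ℝ :=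
  (4 * π * lam) ^ (-(3 : ℝ) / 2) * exp (-r ^ 2 / (4 * lam))

theorem gaussRad_abs (lam x : ℝ) : gaussRad lam |x| = gaussRad lam x := by
  simp only [gaussRad, sq_abs]

theorem hasDerivAt_gaussRad (lam x : ℝ) :
    HasDerivAt (gaussRad lam) (-(x / (2 * lam)) * gaussRad lam x) x := by
  have h := ((((hasDerivAt_id x).fun_pow 2).fun_neg.div_const (4 * lam)).exp).const_mul
    ((4 * π * lam) ^ (-(3 : ℝ) / 2))
  dsimp only [id] at h
  refine h.congr_deriv ?_
  rw [gaussRad]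
  by_cases hlam : lam = 0
  · simp [hlam]
  · field_simp
    ring

theorem continuous_gaussRad (lam : ℝ) : Continuous (gaussRad lam) :=
  continuous_iff_continuousAt.2 fun x => (hasDerivAt_gaussRad lam x).continuousAt

theorem self_mul_gaussRad {lam : ℝ} (hlam : 0 < lam) (x : ℝ) :
    lam * gaussRad lam x =
      (4 * π) ^ (-(3 : ℝ) / 2) * lam ^ (-(1 : ℝ) / 2) * exp (-x ^ 2 / (4 * lam)) := by
  have hpow : lam * lam ^ (-(3 : ℝ) / 2) = lam ^ (-(1 : ℝ) / 2) := by
    rw [mul_comm, ← rpow_add_one hlam.ne']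
    norm_num
  rw [gaussRad, mul_rpow (by positivity) hlam.le, ← hpow]
  ring

theorem integral_radialWave_gaussRad {lam c : ℝ} (hlam : lam ≠ 0) (hc : c ≠ 0) (r t : ℝ) :
    ∫ s in (0 : ℝ)..t,
        ((r - c * s) * gaussRad lam |r - c * s| + (r + c * s) * gaussRad lam (r + c * s)) /
          (2 * r) =
      (lam * gaussRad lam (r - c * t) - lam * gaussRad lam (r + c * t)) / (c * r) := by
  set F : ℝ → ℝ := fun s =>
    (lam * gaussRad lam (r - c * s) - lam * gaussRad lam (r + c * s)) / (c * r)
  have hF : ∀ s, HasDerivAt F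
      (((r - c * s) * gaussRad lam (r - c * s) + (r + c * s) * gaussRad lam (r + c * s)) /
        (2 * r)) s := by
    intro s
    have hminus : HasDerivAt (fun s => r - c * s) (-c) s := by
      simpa using ((hasDerivAt_id s).const_mul c).const_sub r
    have hplus : HasDerivAt (fun s => r + c * s) c s := by
      simpa using ((hasDerivAt_id s).const_mul c).const_add r
    replace hminus := (hasDerivAt_gaussRad lam (r - c * s)).comp s hminus
    replace hplus := (hasDerivAt_gaussRad lam (r + c * s)).comp s hplus
    refine (((hminus.const_mul lam).sub (hplus.const_mul lam)).div_const (c * r)).congr_deriv ?_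
    -- at `r = 0` both sides are junk values `x / 0 = 0`
    by_cases hr : r = 0
    · simp [hr]
    · field_simp
      ring
  have hcont := continuous_gaussRad lam
  have hderiv_cont : Continuous fun s =>
      ((r - c * s) * gaussRad lam (r - c * s) + (r + c * s) * gaussRad lam (r + c * s)) /
        (2 * r) := by
    fun_prop
  simp only [gaussRad_abs]
  rw [integral_eq_sub_of_hasDerivAt (fun s _ => hF s) (hderiv_cont.intervalIntegrable 0 t)]
  simp only [F, mul_zero, sub_zero, add_zero, sub_self, zero_div]

theorem rho2_explicit_general (ν c t : ℝ) (hν : 0 < ν) (hc : 0 < c) (ht : 0 < t)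
    (r : ℝ) :
    (4 * π) ^ (-(3 : ℝ) / 2) * (1 + ν * t) ^ (-(1 : ℝ) / 2) *
        (exp (-(r + c * t) ^ 2 / (4 * (1 + ν * t))) -
          exp (-(r - c * t) ^ 2 / (4 * (1 + ν * t)))) / (c * r) =
      -∫ s in (0 : ℝ)..t,
        ((r - c * s) * gaussRad (1 + ν * t) |r - c * s| +
          (r + c * s) * gaussRad (1 + ν * t) (r + c * s)) / (2 * r) := by
  have hlam : 0 < 1 + ν * t := by positivity
  rw [integral_radialWave_gaussRad hlam.ne' hc.ne', self_mul_gaussRad hlam,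
    self_mul_gaussRad hlam]
  ring

/-- Explicit evaluation of `ρ₂(·,t) = -(w(t) * K_ν(t) * φ₀)`: for radius `r > 0`,
`(4π)^{-3/2}(1+νt)^{-1/2}(e^{-(r+ct)²/(4(1+νt))} - e^{-(r-ct)²/(4(1+νt))})/(cr)`
equals `-∫₀ᵗ [(r-cs)u₀(|r-cs|) + (r+cs)u₀(r+cs)]/(2r) ds` with `u₀ = gaussRad (1+νt)`. -/
theorem rho2_explicit (ν c t : ℝ) (hν : 0 < ν) (hc : 0 < c) (ht : 0 < t)
    (r : ℝ) (hr : 0 < r) :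
    (4 * π) ^ (-(3 : ℝ) / 2) * (1 + ν * t) ^ (-(1 : ℝ) / 2) *
        (exp (-(r + c * t) ^ 2 / (4 * (1 + ν * t))) -
          exp (-(r - c * t) ^ 2 / (4 * (1 + ν * t)))) / (c * r) =
      -∫ s in (0 : ℝ)..t,
        ((r - c * s) * gaussRad (1 + ν * t) |r - c * s| +
          (r + c * s) * gaussRad (1 + ν * t) (r + c * s)) / (2 * r) :=
  rho2_explicit_general ν c t hν hc ht r
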